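/- arXiv:1910.12353 — 3 statements merged into one kernel-verified Lean document; each statement's English description precedes it below -/
import Mathlib

section
/- Let G be a finite weighted graph on vertex set V, let C be a vertex cover of G, let I = V∖C, and fix C̃ ⊆ C. Then every set S ⊆ V with S ∩ C = C̃ satisfies w(S, V∖S) = w(C̃, C∖C̃) + w(C̃, I) + Σ_{i ∈ S∩I} ( w({i}, C∖C̃) − w({i}, C̃) ). -/
open Finset

/-- Total weight of the edges of `G` with one endpoint in `S` and the other in `T`. -/
def cutW {V : Type*} [Fintype V] [DecidableEq V] (G : SimpleGraph V) [DecidableRel G.Adj]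
    (w : Sym2 V → ℝ) (S T : Finset V) : ℝ :=
  ∑ e ∈ G.edgeFinset.filter (fun e => ∃ a ∈ S, ∃ b ∈ T, e = s(a, b)), w e

/-!
The cut weight is additive in each argument over disjoint unions. Splitting `S = C̃ ⊔ J` with
`J = S ∩ I` and `V ∖ S = (C ∖ C̃) ⊔ (I ∖ J)` expands `w(S, V∖S)` into four terms: `w(J, I ∖ J)`
vanishes because `I` is independent, and `w(C̃, I ∖ J) = w(C̃, I) - w(J, C̃)`. The sum over
`i ∈ J` is `w(J, C ∖ C̃) - w(J, C̃)`, since a cut out of a set disjoint from the target is the sum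
of the cuts out of its vertices.
-/

section cutW

variable {V : Type*} [Fintype V] [DecidableEq V] (G : SimpleGraph V) [DecidableRel G.Adj]
  (w : Sym2 V → ℝ)

theorem cutW_comm (S T : Finset V) : cutW G w S T = cutW G w T S := by
  unfold cutW
  congr 1
  refine filter_congr fun e _ => ⟨?_, ?_⟩ <;>
    exact fun ⟨a, ha, b, hb, hab⟩ => ⟨b, hb, a, ha, hab.trans Sym2.eq_swap⟩

@[simp]
theorem cutW_empty_left (T : Finset V) : cutW G w ∅ T = 0 := by
  simp [cutW]

theorem cutW_union_left {A B T : Finset V} (hAB : Disjoint A B) (hAT : Disjoint A T) :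
    cutW G w (A ∪ B) T = cutW G w A T + cutW G w B T := by
  unfold cutW
  have hcross (e : Sym2 V) : (∃ a ∈ A ∪ B, ∃ b ∈ T, e = s(a, b)) ↔
      (∃ a ∈ A, ∃ b ∈ T, e = s(a, b)) ∨ (∃ a ∈ B, ∃ b ∈ T, e = s(a, b)) := by
    simp only [mem_union, or_and_right, exists_or]
  rw [filter_congr fun e _ => hcross e, filter_or, sum_union]
  -- An edge crossing both from `A` and from `B` to `T` would have an endpoint in `A ∩ B` or `A ∩ T`.
  refine disjoint_filter.2 fun e _ ⟨a, ha, b, hb, hA⟩ ⟨a', ha', b', hb', hB⟩ => ?_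
  rcases Sym2.eq_iff.1 (hA.symm.trans hB) with ⟨rfl, -⟩ | ⟨rfl, -⟩
  · exact disjoint_left.1 hAB ha ha'
  · exact disjoint_left.1 hAT ha hb'

theorem cutW_union_right {S A B : Finset V} (hAB : Disjoint A B) (hAS : Disjoint A S) :
    cutW G w S (A ∪ B) = cutW G w S A + cutW G w S B := by
  rw [cutW_comm, cutW_union_left G w hAB hAS, cutW_comm G w A, cutW_comm G w B]

theorem cutW_union_union {A B P Q : Finset V} (hAB : Disjoint A B) (hPQ : Disjoint P Q)
    (h : Disjoint (A ∪ B) (P ∪ Q)) :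
    cutW G w (A ∪ B) (P ∪ Q) =
      cutW G w A P + cutW G w A Q + (cutW G w B P + cutW G w B Q) := by
  have hP := disjoint_union_right.1 (disjoint_union_right.1 h).1.symm
  rw [cutW_union_left G w hAB (disjoint_union_left.1 h).1,
    cutW_union_right G w hPQ hP.1, cutW_union_right G w hPQ hP.2]

theorem cutW_sdiff_right {S A T : Finset V} (hAT : A ⊆ T) (hAS : Disjoint A S) :
    cutW G w S (T \ A) = cutW G w S T - cutW G w S A := by
  conv_rhs => rw [← union_sdiff_of_subset hAT, cutW_union_right G w disjoint_sdiff hAS]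
  ring

theorem cutW_eq_zero_of_forall_not_adj {S T : Finset V} (h : ∀ a ∈ S, ∀ b ∈ T, ¬G.Adj a b) :
    cutW G w S T = 0 := by
  refine sum_eq_zero fun e he => absurd he ?_
  rw [mem_filter, not_and]
  rintro he ⟨a, ha, b, hb, rfl⟩
  exact h a ha b hb (G.mem_edgeFinset.1 he)

theorem sum_cutW_singleton {A T : Finset V} (hAT : Disjoint A T) :
    ∑ i ∈ A, cutW G w {i} T = cutW G w A T := by
  induction A using Finset.induction_on with
  | empty => simp
  | insert i A hi ih =>
    rw [sum_insert hi, ih (disjoint_of_subset_left (subset_insert i A) hAT), insert_eq,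
      cutW_union_left G w (disjoint_singleton_left.2 hi)
        (disjoint_of_subset_left (by simp) hAT)]

end cutW

theorem stmt_3_general {V : Type*} [Fintype V] [DecidableEq V] (G : SimpleGraph V) [DecidableRel G.Adj]
    (w : Sym2 V → ℝ)
    (C : Finset V) (hC : ∀ u v, G.Adj u v → u ∈ C ∨ v ∈ C)
    (I : Finset V) (hI : I = Cᶜ)
    (Ct : Finset V)
    (S : Finset V) (hS : S ∩ C = Ct) :
    cutW G w S Sᶜ =
      cutW G w Ct (C \ Ct) + cutW G w Ct I +
        ∑ i ∈ S ∩ I, (cutW G w {i} (C \ Ct) - cutW G w {i} Ct) := by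
  subst hI
  obtain ⟨J, hJ⟩ : ∃ J, J = S ∩ Cᶜ := ⟨_, rfl⟩
  have hS_split : S = Ct ∪ J := by ext; simp [← hS, hJ]; tauto
  have hSc_split : Sᶜ = C \ Ct ∪ Cᶜ \ J := by ext; simp [← hS, hJ]; tauto
  have hJ_Ct : Disjoint J Ct := by simp [← hS, hJ, disjoint_left]; tauto
  have hJ_C_Ct : Disjoint J (C \ Ct) := by simp [← hS, hJ, disjoint_left]; tauto
  have hJ_indep : cutW G w J (Cᶜ \ J) = 0 :=
    cutW_eq_zero_of_forall_not_adj G w fun a ha b hb hab => by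
      simp only [hJ, mem_inter, mem_sdiff, mem_compl] at ha hb
      exact (hC a b hab).elim ha.2 hb.1
  have hsum : ∑ i ∈ J, (cutW G w {i} (C \ Ct) - cutW G w {i} Ct) =
      cutW G w J (C \ Ct) - cutW G w J Ct := by
    rw [sum_sub_distrib, sum_cutW_singleton G w hJ_C_Ct, sum_cutW_singleton G w hJ_Ct]
  calc cutW G w S Sᶜ = cutW G w (Ct ∪ J) (C \ Ct ∪ Cᶜ \ J) := by rw [← hS_split, ← hSc_split]
    _ = cutW G w Ct (C \ Ct) + cutW G w Ct (Cᶜ \ J) +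
          (cutW G w J (C \ Ct) + cutW G w J (Cᶜ \ J)) :=
      cutW_union_union G w hJ_Ct.symm (by simp [disjoint_left]; tauto)
        (by rw [← hS_split, ← hSc_split]; exact disjoint_compl_right)
    _ = _ := by
      rw [hJ_indep, cutW_sdiff_right G w (by simp [hJ]) hJ_Ct, ← hJ, hsum, cutW_comm G w Ct J]
      ring

/-- If `C` is a vertex cover, `I = V∖C` and `S ∩ C = C̃`, then
`w(S, V∖S) = w(C̃, C∖C̃) + w(C̃, I) + Σ_{i ∈ S∩I} (w({i}, C∖C̃) − w({i}, C̃))`. -/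
theorem stmt_3 {V : Type*} [Fintype V] [DecidableEq V] (G : SimpleGraph V) [DecidableRel G.Adj]
    (w : Sym2 V → ℝ) (hw : ∀ e ∈ G.edgeSet, 0 < w e)
    (C : Finset V) (hC : ∀ u v, G.Adj u v → u ∈ C ∨ v ∈ C)
    (I : Finset V) (hI : I = Cᶜ)
    (Ct : Finset V) (hCt : Ct ⊆ C)
    (S : Finset V) (hS : S ∩ C = Ct) :
    cutW G w S Sᶜ =
      cutW G w Ct (C \ Ct) + cutW G w Ct I +
        ∑ i ∈ S ∩ I, (cutW G w {i} (C \ Ct) - cutW G w {i} Ct) :=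
  stmt_3_general G w C hC I hI Ct S hS
end

section
/- Let G be a finite weighted graph on vertex set V, let C be a vertex cover of G, let I = V∖C, fix C̃ ⊆ C, and let s be an integer with |C̃| ≤ s ≤ |C̃| + |I|. Then min{ w(S, V∖S) : S ⊆ V, S ∩ C = C̃, |S| = s } = w(C̃, C∖C̃) + w(C̃, I) + min{ Σ_{i ∈ T} ( w({i}, C∖C̃) − w({i}, C̃) ) : T ⊆ I, |T| = s − |C̃| }. -/
open Finset

theorem csInf_setOf_add {ι : Type*} [Finite ι] {P : ι → Prop} (hP : ∃ i, P i) (c : ℝ)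
    (f : ι → ℝ) :
    sInf {x | ∃ i, P i ∧ x = c + f i} = c + sInf {x | ∃ i, P i ∧ x = f i} := by
  have himage :
      {x | ∃ i, P i ∧ x = c + f i} = OrderIso.addLeft c '' {x | ∃ i, P i ∧ x = f i} := by
    ext x
    simp [eq_neg_add_iff_add_eq, eq_comm]
  obtain ⟨i, hi⟩ := hP
  have hne : {x | ∃ i, P i ∧ x = f i}.Nonempty := ⟨f i, i, hi, rfl⟩
  have hbdd : BddBelow {x | ∃ i, P i ∧ x = f i} :=
    ((Set.finite_range f).subset (by rintro _ ⟨i, -, rfl⟩; exact ⟨i, rfl⟩)).bddBelow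
  rw [himage, ← (OrderIso.addLeft c).map_csInf' hne hbdd]
  rfl

section

variable {V : Type*} [Fintype V] [DecidableEq V]

theorem Finset.exists_inter_eq_card_eq_iff {C Ct : Finset V} (hCt : Ct ⊆ C) {s : ℕ}
    (hs : Ct.card ≤ s) (P : Finset V → Prop) :
    (∃ S, S ∩ C = Ct ∧ S.card = s ∧ P S) ↔
      ∃ T ⊆ Cᶜ, T.card = s - Ct.card ∧ P (Ct ∪ T) := by
  constructor
  · rintro ⟨S, rfl, rfl, hP⟩
    refine ⟨S \ C, fun x hx => mem_compl.2 (mem_sdiff.1 hx).2, ?_, ?_⟩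
    · rw [← card_inter_add_card_sdiff S C]
      omega
    · rwa [union_comm, sdiff_union_inter]
  · rintro ⟨T, hTC, hcard, hP⟩
    have hT : Disjoint T C := disjoint_left.2 fun x hx => mem_compl.1 (hTC hx)
    refine ⟨Ct ∪ T, ?_, ?_, hP⟩
    · rw [union_inter_distrib_right, inter_eq_left.2 hCt, disjoint_iff_inter_eq_empty.1 hT,
        union_empty]
    · rw [card_union_of_disjoint (hT.mono_right hCt).symm]
      omega

theorem Finset.sum_sum_union_compl_eq {p : V → V → ℝ} (hp : ∀ a b, p a b = p b a)
    {C Ct T : Finset V} (hC : ∀ a ∉ C, ∀ b ∉ C, p a b = 0) (hCt : Ct ⊆ C)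
    (hT : Disjoint T C) :
    ∑ a ∈ Ct ∪ T, ∑ b ∈ (Ct ∪ T)ᶜ, p a b =
      ∑ a ∈ Ct, ∑ b ∈ C \ Ct, p a b + ∑ a ∈ Ct, ∑ b ∈ Cᶜ, p a b +
        ∑ i ∈ T, (∑ b ∈ C \ Ct, p i b - ∑ b ∈ Ct, p i b) := by
  have hTC : T ⊆ Cᶜ := fun x hx => mem_compl.2 (disjoint_left.1 hT hx)
  have hcompl : (Ct ∪ T)ᶜ = (C \ Ct) ∪ (Cᶜ \ T) := by
    ext x
    have := @hTC x
    have := @hCt x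
    simp only [mem_compl, mem_union, mem_sdiff] at *
    tauto
  have hdisj : Disjoint (C \ Ct) (Cᶜ \ T) :=
    disjoint_compl_right.mono sdiff_subset sdiff_subset
  have hTT : ∑ a ∈ T, ∑ b ∈ Cᶜ \ T, p a b = 0 :=
    sum_eq_zero fun a ha => sum_eq_zero fun b hb =>
      hC a (mem_compl.1 (hTC ha)) b (mem_compl.1 (mem_sdiff.1 hb).1)
  have hsymm : ∑ a ∈ Ct, ∑ b ∈ T, p a b = ∑ a ∈ T, ∑ b ∈ Ct, p a b := by
    rw [sum_comm]
    simp only [hp]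
  rw [hcompl, sum_union (hT.mono_right hCt).symm]
  simp only [sum_union hdisj, sum_add_distrib, sum_sub_distrib,
    ← sum_sdiff hTC (f := p _)]
  linarith

end

namespace SimpleGraph

variable {V : Type*} (G : SimpleGraph V) [DecidableRel G.Adj] (w : Sym2 V → ℝ)

def weightedAdj (a b : V) : ℝ := if G.Adj a b then w s(a, b) else 0

theorem weightedAdj_comm (a b : V) : G.weightedAdj w a b = G.weightedAdj w b a := by
  simp only [weightedAdj, G.adj_comm a b, Sym2.eq_swap]

end SimpleGraph

section

variable {V : Type*} [Fintype V] [DecidableEq V] (G : SimpleGraph V) [DecidableRel G.Adj]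
  (w : Sym2 V → ℝ)

theorem cutW_eq_sum_sum_weightedAdj {S T : Finset V} (h : Disjoint S T) :
    cutW G w S T = ∑ a ∈ S, ∑ b ∈ T, G.weightedAdj w a b := by
  rw [← sum_product' S T (G.weightedAdj w)]
  simp only [SimpleGraph.weightedAdj, ← sum_filter]
  symm
  refine sum_bij (fun p _ => s(p.1, p.2)) ?_ ?_ ?_ fun _ _ => rfl
  · simp only [mem_filter, mem_product, SimpleGraph.mem_edgeFinset, SimpleGraph.mem_edgeSet]
    exact fun p ⟨⟨ha, hb⟩, hab⟩ => ⟨hab, p.1, ha, p.2, hb, rfl⟩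
  · simp only [mem_filter, mem_product]
    rintro ⟨a, b⟩ ⟨⟨ha, hb⟩, -⟩ ⟨a', b'⟩ ⟨⟨ha', hb'⟩, -⟩ heq
    rcases Sym2.eq_iff.1 heq with ⟨rfl, rfl⟩ | ⟨rfl, rfl⟩
    · rfl
    · exact absurd hb' (disjoint_left.1 h ha)
  · simp only [mem_filter, SimpleGraph.mem_edgeFinset, mem_product]
    rintro _ ⟨he, a, ha, b, hb, rfl⟩
    exact ⟨(a, b), ⟨⟨ha, hb⟩, he⟩, rfl⟩

theorem cutW_singleton {i : V} {T : Finset V} (hi : i ∉ T) :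
    cutW G w {i} T = ∑ b ∈ T, G.weightedAdj w i b := by
  rw [cutW_eq_sum_sum_weightedAdj G w (disjoint_singleton_left.2 hi), sum_singleton]

theorem cutW_union_compl_eq {C : Finset V} (hC : ∀ u v, G.Adj u v → u ∈ C ∨ v ∈ C)
    {Ct T : Finset V} (hCt : Ct ⊆ C) (hT : Disjoint T C) :
    cutW G w (Ct ∪ T) (Ct ∪ T)ᶜ =
      cutW G w Ct (C \ Ct) + cutW G w Ct Cᶜ +
        ∑ i ∈ T, (cutW G w {i} (C \ Ct) - cutW G w {i} Ct) := by
  have hsingle : ∀ i ∈ T, cutW G w {i} (C \ Ct) - cutW G w {i} Ct =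
      ∑ b ∈ C \ Ct, G.weightedAdj w i b - ∑ b ∈ Ct, G.weightedAdj w i b := fun i hi => by
    have hiC : i ∉ C := disjoint_left.1 hT hi
    rw [cutW_singleton G w fun h => hiC (mem_sdiff.1 h).1,
      cutW_singleton G w fun h => hiC (hCt h)]
  rw [cutW_eq_sum_sum_weightedAdj G w disjoint_compl_right,
    cutW_eq_sum_sum_weightedAdj G w disjoint_sdiff,
    cutW_eq_sum_sum_weightedAdj G w (disjoint_compl_right.mono_right (compl_le_compl hCt)),
    sum_congr rfl hsingle]
  exact sum_sum_union_compl_eq (G.weightedAdj_comm w)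
    (fun a ha b hb => if_neg fun hab => (hC a b hab).elim ha hb) hCt hT

end

theorem stmt_4_general {V : Type*} [Fintype V] [DecidableEq V] (G : SimpleGraph V) [DecidableRel G.Adj]
    (w : Sym2 V → ℝ)
    (C : Finset V) (hC : ∀ u v, G.Adj u v → u ∈ C ∨ v ∈ C)
    (I : Finset V) (hI : I = Cᶜ)
    (Ct : Finset V) (hCt : Ct ⊆ C)
    (s : ℕ) (hs1 : Ct.card ≤ s) (hs2 : s ≤ Ct.card + I.card) :
    sInf {x : ℝ | ∃ S : Finset V, S ∩ C = Ct ∧ S.card = s ∧ x = cutW G w S Sᶜ} =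
      cutW G w Ct (C \ Ct) + cutW G w Ct I +
        sInf {x : ℝ | ∃ T : Finset V, T ⊆ I ∧ T.card = s - Ct.card ∧
          x = ∑ i ∈ T, (cutW G w {i} (C \ Ct) - cutW G w {i} Ct)} := by
  subst hI
  obtain ⟨T₀, hT₀⟩ := exists_subset_card_eq (show s - Ct.card ≤ Cᶜ.card by omega)
  simp only [← and_assoc]
  rw [← csInf_setOf_add ⟨T₀, hT₀⟩]
  congr 1
  ext x
  simp only [Set.mem_ofPred_eq, and_assoc]
  rw [exists_inter_eq_card_eq_iff hCt hs1 fun S => x = cutW G w S Sᶜ]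
  refine exists_congr fun T => and_congr_right fun hTC => ?_
  rw [cutW_union_compl_eq G w hC hCt (disjoint_left.2 fun _ hi => mem_compl.1 (hTC hi))]

/-- If `C` is a vertex cover, `I = V∖C`, `C̃ ⊆ C` and `|C̃| ≤ s ≤ |C̃| + |I|`, then
`min{ w(S, V∖S) : S ∩ C = C̃, |S| = s }
  = w(C̃, C∖C̃) + w(C̃, I) + min{ Σ_{i∈T}(w({i}, C∖C̃) − w({i}, C̃)) : T ⊆ I, |T| = s − |C̃| }`. -/
theorem stmt_4 {V : Type*} [Fintype V] [DecidableEq V] (G : SimpleGraph V) [DecidableRel G.Adj]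
    (w : Sym2 V → ℝ) (hw : ∀ e ∈ G.edgeSet, 0 < w e)
    (C : Finset V) (hC : ∀ u v, G.Adj u v → u ∈ C ∨ v ∈ C)
    (I : Finset V) (hI : I = Cᶜ)
    (Ct : Finset V) (hCt : Ct ⊆ C)
    (s : ℕ) (hs1 : Ct.card ≤ s) (hs2 : s ≤ Ct.card + I.card) :
    sInf {x : ℝ | ∃ S : Finset V, S ∩ C = Ct ∧ S.card = s ∧ x = cutW G w S Sᶜ} =
      cutW G w Ct (C \ Ct) + cutW G w Ct I +
        sInf {x : ℝ | ∃ T : Finset V, T ⊆ I ∧ T.card = s - Ct.card ∧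
          x = ∑ i ∈ T, (cutW G w {i} (C \ Ct) - cutW G w {i} Ct)} :=
  stmt_4_general G w C hC I hI Ct hCt s hs1 hs2
end

section
/- Let w_1, …, w_n be positive integers with Σ_{i=1}^n w_i = 2B, and set w_{n+1} = B. Then the following are equivalent: (i) there exists a subset I ⊆ {1, …, n} with Σ_{i∈I} w_i = B; (ii) there exists a partition of {1, …, n+1} into three sets I_1, I_2, I_3 with Σ_{i∈I_j} w_i ≤ B for each j ∈ {1,2,3}. Moreover, in case (ii) necessarily Σ_{i∈I_j} w_i = B for every j. -/
/-!
The total weight is `3B`, so three parts of weight at most `B` each weigh exactly `B`. The item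
`n + 1` lies in at most one of the first two parts, so the other one is a set of original items
of weight `B`; conversely a half `I` gives the partition `I`, `Iᶜ`, `{n + 1}`.
-/

open Finset

section ThreePartition

variable {ι : Type*} [Fintype ι] [DecidableEq ι] {I₁ I₂ I₃ : Finset ι}

theorem sum_add_sum_add_sum_eq_sum_univ {M : Type*} [AddCommMonoid M] (w : ι → M)
    (h12 : Disjoint I₁ I₂) (h13 : Disjoint I₁ I₃) (h23 : Disjoint I₂ I₃)
    (hcover : I₁ ∪ I₂ ∪ I₃ = univ) :
    ∑ i ∈ I₁, w i + ∑ i ∈ I₂, w i + ∑ i ∈ I₃, w i = ∑ i, w i := by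
  rw [← sum_union h12, ← sum_union (disjoint_union_left.mpr ⟨h13, h23⟩), hcover]

theorem sum_eq_of_partition_three_of_sum_le {w : ι → ℕ} {B : ℕ} (htotal : ∑ i, w i = 3 * B)
    (h12 : Disjoint I₁ I₂) (h13 : Disjoint I₁ I₃) (h23 : Disjoint I₂ I₃)
    (hcover : I₁ ∪ I₂ ∪ I₃ = univ)
    (h1 : ∑ i ∈ I₁, w i ≤ B) (h2 : ∑ i ∈ I₂, w i ≤ B) (h3 : ∑ i ∈ I₃, w i ≤ B) :
    ∑ i ∈ I₁, w i = B ∧ ∑ i ∈ I₂, w i = B ∧ ∑ i ∈ I₃, w i = B := by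
  have := sum_add_sum_add_sum_eq_sum_univ w h12 h13 h23 hcover
  omega

end ThreePartition

namespace Fin

variable {M : Type*} [AddCommMonoid M] {n : ℕ}

theorem exists_sum_castSucc_eq_sum_of_last_notMem (w : Fin (n + 1) → M)
    {S : Finset (Fin (n + 1))} (hS : last n ∉ S) :
    ∃ I : Finset (Fin n), ∑ i ∈ I, w i.castSucc = ∑ i ∈ S, w i := by
  refine ⟨S.preimage castSucc (castSucc_injective n).injOn, sum_preimage _ _ _ _ ?_⟩
  intro j hj hrange
  obtain rfl : j = last n := by_contra fun hne => hrange (exists_castSucc_eq.mpr hne)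
  exact absurd hj hS

theorem exists_partition_three_castSucc_compl_last (w : Fin (n + 1) → M) (I : Finset (Fin n)) :
    ∃ I₁ I₂ I₃ : Finset (Fin (n + 1)),
      Disjoint I₁ I₂ ∧ Disjoint I₁ I₃ ∧ Disjoint I₂ I₃ ∧ I₁ ∪ I₂ ∪ I₃ = univ ∧
      ∑ i ∈ I₁, w i = ∑ i ∈ I, w i.castSucc ∧ ∑ i ∈ I₂, w i = ∑ i ∈ Iᶜ, w i.castSucc ∧
      ∑ i ∈ I₃, w i = w (last n) := by
  refine ⟨I.map castSuccEmb, Iᶜ.map castSuccEmb, {last n}, ?_, ?_, ?_, ?_, sum_map .., sum_map ..,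
    sum_singleton ..⟩
  · exact (disjoint_map _).mpr disjoint_compl_right
  · simp
  · simp
  · rw [← map_union, union_compl, univ_castSuccEmb, cons_eq_insert, insert_eq, union_comm]

end Fin

theorem stmt_17_general (n B : ℕ) (w : Fin (n + 1) → ℕ)
    (hsum : ∑ i : Fin n, w i.castSucc = 2 * B) (hlast : w (Fin.last n) = B) :
    ((∃ I : Finset (Fin n), ∑ i ∈ I, w i.castSucc = B) ↔
      (∃ I₁ I₂ I₃ : Finset (Fin (n + 1)),
        Disjoint I₁ I₂ ∧ Disjoint I₁ I₃ ∧ Disjoint I₂ I₃ ∧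
        I₁ ∪ I₂ ∪ I₃ = Finset.univ ∧
        (∑ i ∈ I₁, w i) ≤ B ∧ (∑ i ∈ I₂, w i) ≤ B ∧ (∑ i ∈ I₃, w i) ≤ B)) ∧
    (∀ I₁ I₂ I₃ : Finset (Fin (n + 1)),
      Disjoint I₁ I₂ → Disjoint I₁ I₃ → Disjoint I₂ I₃ →
      I₁ ∪ I₂ ∪ I₃ = Finset.univ →
      (∑ i ∈ I₁, w i) ≤ B → (∑ i ∈ I₂, w i) ≤ B → (∑ i ∈ I₃, w i) ≤ B →
      ((∑ i ∈ I₁, w i) = B ∧ (∑ i ∈ I₂, w i) = B ∧ (∑ i ∈ I₃, w i) = B)) := by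
  have htotal : ∑ i, w i = 3 * B := by
    rw [Fin.sum_univ_castSucc, hsum, hlast]; ring
  refine ⟨⟨?_, ?_⟩, fun _ _ _ => sum_eq_of_partition_three_of_sum_le htotal⟩
  · rintro ⟨I, hI⟩
    obtain ⟨I₁, I₂, I₃, h12, h13, h23, hcover, e1, e2, e3⟩ :=
      Fin.exists_partition_three_castSucc_compl_last w I
    have hcompl := sum_add_sum_compl I (fun i => w i.castSucc)
    exact ⟨I₁, I₂, I₃, h12, h13, h23, hcover, by omega, by omega, by omega⟩
  · rintro ⟨I₁, I₂, I₃, h12, h13, h23, hcover, h1, h2, h3⟩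
    obtain ⟨e1, e2, -⟩ := sum_eq_of_partition_three_of_sum_le htotal h12 h13 h23 hcover h1 h2 h3
    by_cases hl : Fin.last n ∈ I₁
    · exact e2 ▸ Fin.exists_sum_castSucc_eq_sum_of_last_notMem w (disjoint_left.mp h12 hl)
    · exact e1 ▸ Fin.exists_sum_castSucc_eq_sum_of_last_notMem w hl

/-- Let `w_1, …, w_n` be positive integers summing to `2B` and set `w_{n+1} = B`. Then
there is `I ⊆ {1, …, n}` with `Σ_{i∈I} w_i = B` iff `{1, …, n+1}` can be partitioned into
three sets each of weight at most `B`; moreover in any such partition each weight equals `B`. -/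
theorem stmt_17 (n B : ℕ) (w : Fin (n + 1) → ℕ) (hpos : ∀ i, 0 < w i) (hB : 0 < B)
    (hsum : ∑ i : Fin n, w i.castSucc = 2 * B) (hlast : w (Fin.last n) = B) :
    ((∃ I : Finset (Fin n), ∑ i ∈ I, w i.castSucc = B) ↔
      (∃ I₁ I₂ I₃ : Finset (Fin (n + 1)),
        Disjoint I₁ I₂ ∧ Disjoint I₁ I₃ ∧ Disjoint I₂ I₃ ∧
        I₁ ∪ I₂ ∪ I₃ = Finset.univ ∧
        (∑ i ∈ I₁, w i) ≤ B ∧ (∑ i ∈ I₂, w i) ≤ B ∧ (∑ i ∈ I₃, w i) ≤ B)) ∧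
    (∀ I₁ I₂ I₃ : Finset (Fin (n + 1)),
      Disjoint I₁ I₂ → Disjoint I₁ I₃ → Disjoint I₂ I₃ →
      I₁ ∪ I₂ ∪ I₃ = Finset.univ →
      (∑ i ∈ I₁, w i) ≤ B → (∑ i ∈ I₂, w i) ≤ B → (∑ i ∈ I₃, w i) ≤ B →
      ((∑ i ∈ I₁, w i) = B ∧ (∑ i ∈ I₂, w i) = B ∧ (∑ i ∈ I₃, w i) = B)) :=
  stmt_17_general n B w hsum hlast
end
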